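/- Let X and Y be Banach spaces with Y ≠ {0}. If the set ASE(X,Y) of absolutely strongly exposing operators is dense in L(X,Y), then the set SE(X) of strongly exposing functionals on B_X is dense in X*. -/

import Mathlib

/-!
If `T` absolutely strongly exposes `B_X` at `x₀` and `y*` is a norming functional of norm one for
`T x₀`, then `y* ∘ T` strongly exposes `B_X` at `x₀`: a maximizing sequence for `y* ∘ T` maximizes
`‖T ·‖`, so after rotations `θₙ` it converges to `x₀`, and the rotations themselves must tend to `1`.
Given `f ≠ 0` and a unit vector `y₀`, approximate the rank-one operator `f ⊗ y₀` by such a `T`.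
Then `y* ∘ T` is close to `y*(y₀) f` with `|y*(y₀)| > 1/2`, and since strongly exposing
functionals are stable under nonzero scalars, `y*(y₀)⁻¹ (y* ∘ T)` is strongly exposing and close
to `f`.
-/

open Filter Topology RCLike Bornology

/-- `f` strongly exposes the bounded set `C` at `x₀`. -/
def StronglyExposes {𝕜 X : Type} [RCLike 𝕜] [NormedAddCommGroup X] [NormedSpace 𝕜 X]
    (f : X →L[𝕜] 𝕜) (C : Set X) (x₀ : X) : Prop :=
  x₀ ∈ C ∧ (∀ x ∈ C, re (f x) ≤ re (f x₀)) ∧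
    ∀ u : ℕ → X, (∀ n, u n ∈ C) →
      Tendsto (fun n => re (f (u n))) atTop (𝓝 (re (f x₀))) →
      Tendsto u atTop (𝓝 x₀)

/-- `f` strongly exposes the closed unit ball at `x₀`. -/
def StronglyExposesBall {𝕜 X : Type} [RCLike 𝕜] [NormedAddCommGroup X] [NormedSpace 𝕜 X]
    (f : X →L[𝕜] 𝕜) (x₀ : X) : Prop :=
  ‖x₀‖ ≤ 1 ∧ re (f x₀) = ‖f‖ ∧
    ∀ u : ℕ → X, (∀ n, ‖u n‖ ≤ 1) →
      Tendsto (fun n => re (f (u n))) atTop (𝓝 ‖f‖) →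
      Tendsto u atTop (𝓝 x₀)

/-- `T` absolutely strongly exposes the closed unit ball at `x₀`. -/
def AbsStronglyExposes {𝕜 X Y : Type} [RCLike 𝕜] [NormedAddCommGroup X] [NormedSpace 𝕜 X]
    [NormedAddCommGroup Y] [NormedSpace 𝕜 Y] (T : X →L[𝕜] Y) (x₀ : X) : Prop :=
  ‖x₀‖ ≤ 1 ∧
    ∀ u : ℕ → X, (∀ n, ‖u n‖ ≤ 1) →
      Tendsto (fun n => ‖T (u n)‖) atTop (𝓝 ‖T‖) →
      ∃ θ : ℕ → 𝕜, (∀ n, ‖θ n‖ = 1) ∧ Tendsto (fun n => θ n • u n) atTop (𝓝 x₀)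


namespace RCLike

variable {𝕜 : Type*} [RCLike 𝕜]

theorem norm_sub_ofReal_sq_le {z : 𝕜} {c : ℝ} (hz : ‖z‖ ≤ c) :
    ‖z - c‖ ^ 2 ≤ 2 * c * (c - re z) := by
  have hre : re (z - c) = re z - c := by simp
  have him : im (z - c) = im z := by simp
  rw [norm_sq_eq_def, hre, him]
  nlinarith [norm_sq_eq_def (z := z), norm_nonneg z]

theorem tendsto_ofReal_of_tendsto_re {α : Type*} {l : Filter α} {a : α → 𝕜} {c : ℝ}
    (ha : ∀ i, ‖a i‖ ≤ c) (h : Tendsto (fun i => re (a i)) l (𝓝 c)) :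
    Tendsto a l (𝓝 (c : 𝕜)) := by
  rw [tendsto_iff_norm_sub_tendsto_zero]
  have hbound : Tendsto (fun i => 2 * c * (c - re (a i))) l (𝓝 0) := by
    simpa using ((tendsto_const_nhds (x := c)).sub h).const_mul (2 * c)
  have hsq : Tendsto (fun i => ‖a i - c‖ ^ 2) l (𝓝 0) :=
    squeeze_zero (fun _ => by positivity) (fun i => norm_sub_ofReal_sq_le (ha i)) hbound
  simpa [Real.sqrt_sq (norm_nonneg _)] using hsq.sqrt

end RCLike

variable {𝕜 X Y : Type} [RCLike 𝕜] [NormedAddCommGroup X] [NormedSpace 𝕜 X]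
  [NormedAddCommGroup Y] [NormedSpace 𝕜 Y]

theorem stronglyExposesBall_of_subsingleton [Subsingleton X] (f : X →L[𝕜] 𝕜) (x₀ : X) :
    StronglyExposesBall f x₀ := by
  refine ⟨by simp [Subsingleton.elim x₀ 0], by simp [Subsingleton.elim f 0], fun u _ _ => ?_⟩
  simp [Subsingleton.elim _ x₀]

theorem StronglyExposesBall.smul {f : X →L[𝕜] 𝕜} {x₀ : X} (hf : StronglyExposesBall f x₀)
    {c : 𝕜} (hc : c ≠ 0) : StronglyExposesBall (c • f) ((c⁻¹ * ‖c‖) • x₀) := by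
  obtain ⟨hx₀, hfx₀, hf⟩ := hf
  have hc' : (‖c‖ : 𝕜) ≠ 0 := by simpa using hc
  have hrot : ‖c⁻¹ * ‖c‖‖ = 1 := by simp [hc]
  refine ⟨by rwa [norm_smul, hrot, one_mul], ?_, fun u hu hcu => ?_⟩
  · have : (c • f) ((c⁻¹ * ‖c‖) • x₀) = ‖c‖ * f x₀ := by
      simp only [smul_apply, map_smul, smul_eq_mul]
      field_simp
    rw [this, re_ofReal_mul, hfx₀, norm_smul]
  set v : ℕ → X := fun n => ((‖c‖ : 𝕜)⁻¹ * c) • u n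
  have hv : ∀ n, ‖v n‖ ≤ 1 := fun n => by simpa [v, norm_smul, hc] using hu n
  have hfv : Tendsto (fun n => re (f (v n))) atTop (𝓝 ‖f‖) := by
    have := hcu.const_mul ‖c‖⁻¹
    rw [norm_smul, ← mul_assoc, inv_mul_cancel₀ (norm_ne_zero_iff.mpr hc), one_mul] at this
    refine this.congr fun n => ?_
    simp only [v, map_smul, smul_eq_mul, smul_apply, mul_assoc,
      ← ofReal_inv, re_ofReal_mul]
  refine ((hf v hv hfv).const_smul (c⁻¹ * ‖c‖)).congr fun n => ?_
  simp only [v, smul_smul]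
  field_simp
  simp

theorem ContinuousLinearMap.exists_tendsto_norm_apply_opNorm (S : X →L[𝕜] Y) :
    ∃ u : ℕ → X, (∀ n, ‖u n‖ ≤ 1) ∧ Tendsto (fun n => ‖S (u n)‖) atTop (𝓝 ‖S‖) := by
  have hex (n : ℕ) : ∃ x : X, ‖x‖ < 1 ∧ ‖S‖ - (n + 1 : ℝ)⁻¹ < ‖S x‖ :=
    S.exists_lt_apply_of_lt_opNorm (sub_lt_self _ (by positivity))
  choose u hu hSu using hex
  refine ⟨u, fun n => (hu n).le, tendsto_of_tendsto_of_tendsto_of_le_of_le ?_ tendsto_const_nhds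
    (fun n => (hSu n).le) fun n => S.le_of_opNorm_le_of_le le_rfl (hu n).le |>.trans_eq
    (mul_one _)⟩
  simpa using tendsto_const_nhds.sub (tendsto_one_div_add_atTop_nhds_zero_nat (𝕜 := ℝ))

theorem AbsStronglyExposes.norm_apply_eq_opNorm {S : X →L[𝕜] Y} {x₀ : X}
    (hS : AbsStronglyExposes S x₀) : ‖S x₀‖ = ‖S‖ := by
  obtain ⟨u, hu, hSu⟩ := S.exists_tendsto_norm_apply_opNorm
  obtain ⟨θ, hθ, hθu⟩ := hS.2 u hu hSu
  have hSθu : Tendsto (fun n => ‖S (θ n • u n)‖) atTop (𝓝 ‖S x₀‖) :=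
    ((S.continuous.tendsto x₀).comp hθu).norm
  simp only [map_smul, norm_smul, hθ, one_mul] at hSθu
  exact tendsto_nhds_unique hSθu hSu

theorem ContinuousLinearMap.norm_comp_eq_opNorm {S : X →L[𝕜] Y} {x₀ : X} (hx₀ : ‖x₀‖ ≤ 1)
    {y : Y →L[𝕜] 𝕜} (hy : ‖y‖ ≤ 1) (hyS : y (S x₀) = ‖S‖) : ‖y.comp S‖ = ‖S‖ := by
  refine le_antisymm ((y.opNorm_comp_le S).trans (mul_le_of_le_one_left (norm_nonneg _) hy)) ?_
  calc ‖S‖ = ‖y.comp S x₀‖ := by simp [hyS]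
    _ ≤ ‖y.comp S‖ := (y.comp S).le_of_opNorm_le_of_le le_rfl hx₀ |>.trans_eq (mul_one _)

theorem AbsStronglyExposes.stronglyExposesBall_comp {S : X →L[𝕜] Y} {x₀ : X}
    (hS : AbsStronglyExposes S x₀) (hS₀ : S ≠ 0) {y : Y →L[𝕜] 𝕜} (hy : ‖y‖ ≤ 1)
    (hyS : y (S x₀) = ‖S‖) : StronglyExposesBall (y.comp S) x₀ := by
  have hnorm := ContinuousLinearMap.norm_comp_eq_opNorm hS.1 hy hyS
  refine ⟨hS.1, by simp [hnorm, hyS], fun u hu hgu => ?_⟩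
  rw [hnorm] at hgu
  have hbound : ∀ n, ‖y (S (u n))‖ ≤ ‖S‖ := fun n =>
    (y.comp S).le_of_opNorm_le_of_le hnorm.le (hu n) |>.trans_eq (mul_one _)
  -- `re (y (S x)) ≤ ‖S x‖ ≤ ‖S‖`, so `S` is normed along `u`
  have hSu : Tendsto (fun n => ‖S (u n)‖) atTop (𝓝 ‖S‖) :=
    tendsto_of_tendsto_of_tendsto_of_le_of_le hgu tendsto_const_nhds
      (fun n => (re_le_norm _).trans (y.le_of_opNorm_le_of_le hy le_rfl |>.trans_eq (one_mul _)))
      fun n => S.le_of_opNorm_le_of_le le_rfl (hu n) |>.trans_eq (mul_one _)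
  obtain ⟨θ, hθ, hθu⟩ := hS.2 u hu hSu
  have hyu : Tendsto (fun n => y (S (u n))) atTop (𝓝 (‖S‖ : 𝕜)) :=
    tendsto_ofReal_of_tendsto_re hbound hgu
  have hyθu : Tendsto (fun n => θ n * y (S (u n))) atTop (𝓝 (‖S‖ : 𝕜)) := by
    simpa [Function.comp_def, hyS] using ((y.comp S).continuous.tendsto x₀).comp hθu
  have hS' : (‖S‖ : 𝕜) ≠ 0 := by simpa using hS₀
  -- the rotations `θ n` tend to `1` because both `y (S (u n))` and `θ n * y (S (u n))` tend to `‖S‖`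
  have hθ₁ : Tendsto θ atTop (𝓝 1) := by
    refine ((hyθu.div hyu hS').congr' ?_).trans (by rw [div_self hS'])
    filter_upwards [hyu.eventually_ne hS'] with n hn
    exact mul_div_cancel_right₀ _ hn
  have hθ₀ : ∀ n, θ n ≠ 0 := fun n => norm_ne_zero_iff.mp (by simp [hθ n])
  simpa [inv_smul_smul₀ (hθ₀ _)] using (hθ₁.inv₀ one_ne_zero).smul hθu

theorem exists_stronglyExposesBall_near {f : X →L[𝕜] 𝕜} {y₀ : Y} (hy₀ : ‖y₀‖ = 1)
    {S : X →L[𝕜] Y} {x₀ : X} (hS : AbsStronglyExposes S x₀) {δ : ℝ}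
    (hST : ‖S - f.smulRight y₀‖ ≤ δ) (hδ : 4 * δ < ‖f‖) :
    ∃ g x₁, StronglyExposesBall g x₁ ∧ ‖g - f‖ ≤ 2 * δ := by
  have hSf : ‖f‖ - δ ≤ ‖S‖ := by
    have := norm_sub_norm_le (f.smulRight y₀) S
    rw [norm_sub_rev, ContinuousLinearMap.norm_smulRight_apply, hy₀, mul_one] at this
    linarith
  have hS₀ : S ≠ 0 := norm_pos_iff.mp (by linarith [(norm_nonneg _).trans hST])
  obtain ⟨y, hy, hyS⟩ := exists_dual_vector 𝕜 (S x₀)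
    (by rw [hS.norm_apply_eq_opNorm]; exact norm_ne_zero_iff.mpr hS₀)
  rw [hS.norm_apply_eq_opNorm] at hyS
  have hg := hS.stronglyExposesBall_comp hS₀ hy.le hyS
  have hgf : ‖y.comp S - y y₀ • f‖ ≤ δ := by
    have : y.comp S - y y₀ • f = y.comp (S - f.smulRight y₀) := by ext x; simp [mul_comm]
    rw [this]
    exact (y.opNorm_comp_le _).trans (by rw [hy, one_mul]; exact hST)
  -- `‖y.comp S‖ = ‖S‖ ≥ ‖f‖ - δ` forces `‖y y₀‖ > 1/2`, so dividing by `y y₀` costs a factor `2`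
  have hyy₀ : 1 / 2 < ‖y y₀‖ := by
    have := norm_sub_norm_le (y.comp S) (y y₀ • f)
    rw [norm_smul, ContinuousLinearMap.norm_comp_eq_opNorm hS.1 hy.le hyS] at this
    nlinarith [norm_nonneg f]
  have hyy₀_ne : y y₀ ≠ 0 := norm_pos_iff.mp (by linarith)
  refine ⟨_, _, hg.smul (inv_ne_zero hyy₀_ne), ?_⟩
  calc ‖(y y₀)⁻¹ • y.comp S - f‖ = ‖y y₀‖⁻¹ * ‖y.comp S - y y₀ • f‖ := by
        rw [← norm_inv, ← norm_smul, smul_sub, inv_smul_smul₀ hyy₀_ne]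
    _ ≤ 2 * δ := by
        rw [inv_mul_le_iff₀ (by linarith)]
        nlinarith [(norm_nonneg _).trans hST]

theorem mem_closure_stronglyExposesBall [Nontrivial Y]
    (hdense : Dense {T : X →L[𝕜] Y | ∃ x₀, AbsStronglyExposes T x₀}) {f : X →L[𝕜] 𝕜}
    (hf : f ≠ 0) : f ∈ closure {f : X →L[𝕜] 𝕜 | ∃ x₀, StronglyExposesBall f x₀} := by
  rw [Metric.mem_closure_iff]
  intro ε hε
  obtain ⟨y, hy⟩ := exists_ne (0 : Y)
  have hf' : 0 < ‖f‖ := norm_pos_iff.mpr hf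
  set δ := min (‖f‖ / 8) (ε / 4)
  have hδ : 0 < δ := lt_min (by positivity) (by positivity)
  obtain ⟨S, hST, x₀, hS⟩ :=
    Metric.dense_iff.mp hdense (f.smulRight ((‖y‖⁻¹ : 𝕜) • y)) δ hδ
  rw [Metric.mem_ball, dist_eq_norm] at hST
  obtain ⟨g, x₁, hg, hgf⟩ := exists_stronglyExposesBall_near (norm_smul_inv_norm hy) hS hST.le
    (by linarith [min_le_left (‖f‖ / 8) (ε / 4)])
  refine ⟨g, ⟨x₁, hg⟩, ?_⟩
  rw [dist_comm, dist_eq_norm]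
  linarith [min_le_right (‖f‖ / 8) (ε / 4)]

theorem stmt6_general {𝕜 X Y : Type} [RCLike 𝕜]
    [NormedAddCommGroup X] [NormedSpace 𝕜 X]
    [NormedAddCommGroup Y] [NormedSpace 𝕜 Y] [Nontrivial Y]
    (hdense : Dense {T : X →L[𝕜] Y | ∃ x₀, AbsStronglyExposes T x₀}) :
    Dense {f : X →L[𝕜] 𝕜 | ∃ x₀, StronglyExposesBall f x₀} := by
  rcases subsingleton_or_nontrivial X with hX | hX
  · exact fun f => subset_closure ⟨0, stronglyExposesBall_of_subsingleton f 0⟩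
  · exact dense_closure.mp <| (dense_compl_singleton 0).mono fun f hf =>
      mem_closure_stronglyExposesBall hdense hf

theorem stmt6 {𝕜 X Y : Type} [RCLike 𝕜]
    [NormedAddCommGroup X] [NormedSpace 𝕜 X] [CompleteSpace X]
    [NormedAddCommGroup Y] [NormedSpace 𝕜 Y] [CompleteSpace Y] [Nontrivial Y]
    (hdense : Dense {T : X →L[𝕜] Y | ∃ x₀, AbsStronglyExposes T x₀}) :
    Dense {f : X →L[𝕜] 𝕜 | ∃ x₀, StronglyExposesBall f x₀} :=
  stmt6_general hdense
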